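/- arXiv:1811.02503 — 2 statements merged into one kernel-verified Lean document; each statement's English description precedes it below -/
import Mathlib

section
/- Let V be a finite index set and let (A, S, B) be a partition of V with A and B nonempty. Let Σ be a symmetric positive definite real V×V matrix such that the (A,B) block of Σ⁻¹ is zero, i.e. (Σ⁻¹)_{a b} = 0 for all a ∈ A, b ∈ B. Then det Σ = det Σ_{A∪S} · det Σ_{B∪S} / det Σ_S, where Σ_U denotes the principal sub-matrix of Σ indexed by U ⊆ V, with the convention det Σ_∅ = 1. -/
open Matrix

def psub {V : Type*} [Fintype V] [DecidableEq V] (M : Matrix V V ℝ) (A : Finset V) :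
    Matrix A A ℝ :=
  M.submatrix (fun a => a.1) (fun a => a.1)

/-! Jacobi's complementary minor identity: `det Σ_U = det (Σ⁻¹)_{Uᶜ} · det Σ`. Applied to the
three blocks `A ∪ S`, `B ∪ S` and `S`, it expresses their minors through `det (Σ⁻¹)_B`,
`det (Σ⁻¹)_A` and `det (Σ⁻¹)_{A ∪ B}`, and the last one factors as `det (Σ⁻¹)_A · det (Σ⁻¹)_B`
because the `(A, B)` block of `Σ⁻¹` vanishes. -/

namespace Matrix

variable {R : Type*} [CommRing R] {l r : Type*} [Fintype l] [Fintype r] [DecidableEq l]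
  [DecidableEq r]

/-- Multiplying `N` by the first block column of `K = N⁻¹`, completed by `0` and `1`, gives the
block upper triangular matrix `[[1, N₁₂], [0, N₂₂]]`. -/
theorem det_toBlocks₂₂_eq_det_toBlocks₁₁_mul_det_of_mul_eq_one {N K : Matrix (l ⊕ r) (l ⊕ r) R}
    (hNK : N * K = 1) : N.toBlocks₂₂.det = K.toBlocks₁₁.det * N.det := by
  rw [← fromBlocks_toBlocks N, ← fromBlocks_toBlocks K, fromBlocks_multiply, ← fromBlocks_one,
    fromBlocks_inj] at hNK
  obtain ⟨h₁₁, -, h₂₁, -⟩ := hNK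
  have hprod : N * fromBlocks K.toBlocks₁₁ 0 K.toBlocks₂₁ 1 =
      fromBlocks 1 N.toBlocks₁₂ 0 N.toBlocks₂₂ := by
    rw [← fromBlocks_toBlocks N, fromBlocks_multiply, h₁₁, h₂₁]
    simp
  calc N.toBlocks₂₂.det = (fromBlocks 1 N.toBlocks₁₂ 0 N.toBlocks₂₂).det := by
        rw [det_fromBlocks_zero₂₁, det_one, one_mul]
    _ = K.toBlocks₁₁.det * N.det := by
        rw [← hprod, det_mul, det_fromBlocks_zero₁₂, det_one, mul_one, mul_comm]

end Matrix

section PrincipalMinors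

variable {V : Type*} [Fintype V] [DecidableEq V]

theorem det_psub_eq_det_psub_inv_mul_det (M : Matrix V V ℝ) (hM : IsUnit M.det)
    {P Q : Finset V} (hPQ : Disjoint P Q) (hcover : P ∪ Q = Finset.univ) :
    (psub M Q).det = (psub M⁻¹ P).det * M.det := by
  let e : P ⊕ Q ≃ V := (Equiv.Finset.union P Q hPQ).trans
    (Equiv.subtypeUnivEquiv fun v => hcover ▸ Finset.mem_univ v)
  have h := det_toBlocks₂₂_eq_det_toBlocks₁₁_mul_det_of_mul_eq_one
    (mul_nonsing_inv (M.submatrix e e) (by rwa [det_submatrix_equiv_self]))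
  rwa [inv_submatrix_equiv, det_submatrix_equiv_self] at h

theorem det_psub_union_of_eq_zero (M : Matrix V V ℝ) {P Q : Finset V} (hPQ : Disjoint P Q)
    (hzero : ∀ p ∈ P, ∀ q ∈ Q, M p q = 0) :
    (psub M (P ∪ Q)).det = (psub M P).det * (psub M Q).det := by
  let e := Equiv.Finset.union P Q hPQ
  have hblocks : (psub M (P ∪ Q)).submatrix e e =
      fromBlocks (psub M P) 0 ((psub M (P ∪ Q)).submatrix e e).toBlocks₂₁ (psub M Q) := by
    conv_lhs => rw [← fromBlocks_toBlocks ((psub M (P ∪ Q)).submatrix e e)]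
    congr 1
    ext p q
    exact hzero p p.2 q q.2
  rw [← det_submatrix_equiv_self e, hblocks, det_fromBlocks_zero₁₂]

end PrincipalMinors

theorem stmt_0_general {V : Type*} [Fintype V] [DecidableEq V]
    (A S B : Finset V)
    (hAS : Disjoint A S) (hAB : Disjoint A B) (hSB : Disjoint S B)
    (hcover : A ∪ S ∪ B = Finset.univ)
    (Sg : Matrix V V ℝ) (hpd : Sg.PosDef)
    (hzero : ∀ a ∈ A, ∀ b ∈ B, Sg⁻¹ a b = 0) :
    Sg.det = (psub Sg (A ∪ S)).det * (psub Sg (B ∪ S)).det / (psub Sg S).det := by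
  have hunit : IsUnit Sg.det := hpd.det_pos.ne'.isUnit
  have hS : (psub Sg S).det ≠ 0 := (hpd.submatrix Subtype.val_injective).det_pos.ne'
  have hAS_B : (psub Sg (A ∪ S)).det = (psub Sg⁻¹ B).det * Sg.det :=
    det_psub_eq_det_psub_inv_mul_det Sg hunit
      (Finset.disjoint_union_right.2 ⟨hAB.symm, hSB.symm⟩)
      (by rw [← hcover, Finset.union_comm, Finset.union_assoc])
  have hBS_A : (psub Sg (B ∪ S)).det = (psub Sg⁻¹ A).det * Sg.det :=
    det_psub_eq_det_psub_inv_mul_det Sg hunit (Finset.disjoint_union_right.2 ⟨hAB, hAS⟩)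
      (by rw [← hcover, Finset.union_comm B, Finset.union_assoc])
  have hS_AB : (psub Sg S).det = (psub Sg⁻¹ A).det * (psub Sg⁻¹ B).det * Sg.det := by
    rw [det_psub_eq_det_psub_inv_mul_det Sg hunit (P := A ∪ B)
        (Finset.disjoint_union_left.2 ⟨hAS, hSB.symm⟩)
        (by rw [← hcover, Finset.union_right_comm]),
      det_psub_union_of_eq_zero Sg⁻¹ hAB hzero]
  rw [eq_div_iff hS, hAS_B, hBS_A, hS_AB]
  ring

/-- If `(A, S, B)` is a partition of `V` with `A`, `B` nonempty and `Σ` is a symmetric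
positive definite matrix whose inverse has zero `(A,B)` block, then
`det Σ = det Σ_{A∪S} · det Σ_{B∪S} / det Σ_S` (with `det Σ_∅ = 1`, which is automatic
for a matrix indexed by the empty type). -/
theorem stmt_0 {V : Type*} [Fintype V] [DecidableEq V]
    (A S B : Finset V) (hA : A.Nonempty) (hB : B.Nonempty)
    (hAS : Disjoint A S) (hAB : Disjoint A B) (hSB : Disjoint S B)
    (hcover : A ∪ S ∪ B = Finset.univ)
    (Sg : Matrix V V ℝ) (hsym : Sg.IsSymm) (hpd : Sg.PosDef)
    (hzero : ∀ a ∈ A, ∀ b ∈ B, Sg⁻¹ a b = 0) :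
    Sg.det = (psub Sg (A ∪ S)).det * (psub Sg (B ∪ S)).det / (psub Sg S).det :=
  stmt_0_general A S B hAS hAB hSB hcover Sg hpd hzero
end

section
/- Let V be a finite set and let C₁, …, C_k be subsets of V with C₁ ∪ ⋯ ∪ C_k = V satisfying the running intersection property with separators S_i := C_i ∩ (C₁ ∪ ⋯ ∪ C_{i−1}) for i = 2, …, k. Let Ω be a symmetric positive definite real V×V matrix such that (Ω⁻¹)_{v w} = 0 for every pair of distinct vertices v, w that are not both contained in some C_i. Then det Ω = (∏_{i=1}^{k} det Ω_{C_i}) / (∏_{i=2}^{k} det Ω_{S_i}), where Ω_U denotes the principal sub-matrix indexed by U and det Ω_∅ = 1 by convention. -/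
/-
Induct on `k`. Put `A = C₁ ∪ ⋯ ∪ C_{k-1}` and `B = C_k`, so that `S_k = A ∩ B`, and let
`K = Ω⁻¹`. Jacobi's identity `det Ω_A = det Ω · det K_{Aᶜ}`, applied to `A`, `B` and `A ∩ B`,
together with `det K_{Aᶜ ∪ Bᶜ} = det K_{Aᶜ} · det K_{Bᶜ}` (the zero pattern makes `K` block
diagonal there), gives `det Ω_A · det Ω_B = det Ω · det Ω_{A ∩ B}`.
The zero pattern passes to `(Ω_A)⁻¹`: by the running intersection property, a pair of vertices
of `A` with no common clique among `C₁, …, C_{k-1}` has no common clique at all and has a vertex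
`v ∉ B`. The row of `K` at `v` then vanishes off `A`, so its restriction to `A` is the row of
`(Ω_A)⁻¹` at `v`. Finally `S₁ = ∅` contributes `det Ω_∅ = 1`.
-/

open Matrix

open Finset

section Cliques

variable {V : Type*} [DecidableEq V] {k : ℕ}

def separator (C : Fin k → Finset V) (i : Fin k) : Finset V :=
  C i ∩ (Iio i).biUnion C

/-- Equivalent to the usual condition: `S₁ = ∅`, and an empty `S_i` lies in `C₁`. -/
def RunningIntersection (C : Fin k → Finset V) : Prop :=
  ∀ i, (separator C i).Nonempty → ∃ l < i, separator C i ⊆ C l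

theorem biUnion_univ_fin_succ (C : Fin (k + 1) → Finset V) :
    univ.biUnion C = univ.biUnion (Fin.init C) ∪ C (Fin.last k) := by
  ext v
  simp [Fin.exists_fin_succ', Fin.init, or_comm]

theorem separator_init (C : Fin (k + 1) → Finset V) (j : Fin k) :
    separator (Fin.init C) j = separator C j.castSucc := by
  ext v
  simp [separator, Fin.init, ← Fin.map_castSuccEmb_Iio]

theorem separator_last (C : Fin (k + 1) → Finset V) :
    separator C (Fin.last k) = C (Fin.last k) ∩ univ.biUnion (Fin.init C) := by
  ext v
  simp [separator, Fin.init, Fin.Iio_last_eq_map]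

theorem separator_eq_empty_of_isMin (C : Fin k → Finset V) {i : Fin k} (hi : IsMin i) :
    separator C i = ∅ := by
  simp [separator, Finset.Iio_eq_empty.mpr hi]

theorem RunningIntersection.init {C : Fin (k + 1) → Finset V} (hC : RunningIntersection C) :
    RunningIntersection (Fin.init C) := by
  intro j hj
  rw [separator_init] at hj ⊢
  obtain ⟨l, hl, hsub⟩ := hC _ hj
  obtain ⟨l', rfl⟩ := Fin.exists_castSucc_eq.mpr (hl.trans (Fin.castSucc_lt_last j)).ne
  exact ⟨l', Fin.castSucc_lt_castSucc_iff.mp hl, hsub⟩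

theorem RunningIntersection.exists_mem_init {C : Fin (k + 1) → Finset V}
    (hC : RunningIntersection C) {v w : V} (hv : v ∈ univ.biUnion (Fin.init C))
    (hw : w ∈ univ.biUnion (Fin.init C)) {i : Fin (k + 1)} (hvi : v ∈ C i) (hwi : w ∈ C i) :
    ∃ j, v ∈ Fin.init C j ∧ w ∈ Fin.init C j := by
  induction i using Fin.lastCases with
  | cast j => exact ⟨j, hvi, hwi⟩
  | last =>
    have hsep : ∀ x ∈ univ.biUnion (Fin.init C), x ∈ C (Fin.last k) →
        x ∈ separator C (Fin.last k) := fun x hx hxl => by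
      rw [separator_last]
      exact mem_inter.mpr ⟨hxl, hx⟩
    obtain ⟨l, hl, hsub⟩ := hC _ ⟨v, hsep v hv hvi⟩
    obtain ⟨j, rfl⟩ := Fin.exists_castSucc_eq.mpr hl.ne
    exact ⟨j, hsub (hsep v hv hvi), hsub (hsep w hw hwi)⟩

theorem forall_notMem_of_notMem_last {C : Fin (k + 1) → Finset V} {v w : V}
    (hv : v ∉ C (Fin.last k)) (hw : w ∉ univ.biUnion (Fin.init C))
    (i : Fin (k + 1)) (hvi : v ∈ C i) : w ∉ C i := by
  induction i using Fin.lastCases with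
  | last => exact absurd hvi hv
  | cast j => exact fun hwj => hw (mem_biUnion.mpr ⟨j, mem_univ j, hwj⟩)

end Cliques

namespace Matrix

variable {α β : Type*} [Fintype α] [Fintype β] [DecidableEq α] [DecidableEq β]

theorem det_mul_det_toBlocks₂₂_inv {M : Matrix (α ⊕ β) (α ⊕ β) ℝ} (hM : IsUnit M.det) :
    M.det * (M⁻¹).toBlocks₂₂.det = M.toBlocks₁₁.det := by
  have hMK := mul_nonsing_inv M hM
  obtain ⟨K₁₁, K₁₂, K₂₁, K₂₂, hK⟩ : ∃ K₁₁ K₁₂ K₂₁ K₂₂, M⁻¹ = fromBlocks K₁₁ K₁₂ K₂₁ K₂₂ :=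
    ⟨_, _, _, _, (fromBlocks_toBlocks M⁻¹).symm⟩
  obtain ⟨P, Q, R, S, rfl⟩ : ∃ P Q R S, M = fromBlocks P Q R S :=
    ⟨_, _, _, _, (fromBlocks_toBlocks M).symm⟩
  rw [hK, fromBlocks_multiply, ← fromBlocks_one, fromBlocks_inj] at hMK
  have key : fromBlocks P Q R S * fromBlocks 1 K₁₂ 0 K₂₂ = fromBlocks P 0 R 1 := by
    simp only [fromBlocks_multiply, Matrix.mul_one, Matrix.mul_zero, add_zero, hMK.2.1,
      hMK.2.2.2]
  simpa [hK, det_fromBlocks_zero₂₁, det_fromBlocks_zero₁₂] using congrArg det key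

end Matrix

section Minors

variable {V : Type*} [Fintype V] [DecidableEq V]

theorem det_mul_det_psub_inv_compl {M : Matrix V V ℝ} (hM : IsUnit M.det) (A : Finset V) :
    M.det * (psub M⁻¹ Aᶜ).det = (psub M A).det := by
  let e : (A ⊕ ↥Aᶜ) ≃ V :=
    (Equiv.Finset.union A Aᶜ disjoint_compl_right).trans
      (Equiv.subtypeUnivEquiv fun v => by simp)
  have hdet : (M.submatrix e e).det = M.det := det_submatrix_equiv_self e M
  have := det_mul_det_toBlocks₂₂_inv (M := M.submatrix e e) (by rwa [hdet])
  rwa [inv_submatrix_equiv, hdet] at this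

theorem det_psub_union_of_forall_apply_eq_zero (K : Matrix V V ℝ) {A B : Finset V}
    (hAB : Disjoint A B) (hzero : ∀ b ∈ B, ∀ a ∈ A, K b a = 0) :
    (psub K (A ∪ B)).det = (psub K A).det * (psub K B).det := by
  let N := (psub K (A ∪ B)).submatrix (Equiv.Finset.union A B hAB) (Equiv.Finset.union A B hAB)
  have hN : N.toBlocks₂₁ = 0 := by
    ext b a
    exact hzero b b.2 a a.2
  rw [← det_submatrix_equiv_self (Equiv.Finset.union A B hAB)]
  change N.det = _
  rw [← fromBlocks_toBlocks N, hN, det_fromBlocks_zero₂₁]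
  rfl

theorem det_psub_mul_det_psub {M : Matrix V V ℝ} (hM : IsUnit M.det) {A B : Finset V}
    (hAB : A ∪ B = univ) (hzero : ∀ v ∉ B, ∀ w ∉ A, M⁻¹ v w = 0) :
    (psub M A).det * (psub M B).det = M.det * (psub M (A ∩ B)).det := by
  have hdisj : Disjoint Aᶜ Bᶜ := by
    rw [disjoint_iff, ← compl_sup]
    simp [hAB]
  have hblock : (psub M⁻¹ (A ∩ B)ᶜ).det = (psub M⁻¹ Aᶜ).det * (psub M⁻¹ Bᶜ).det := by
    rw [compl_inter]
    exact det_psub_union_of_forall_apply_eq_zero _ hdisj fun v hv w hw =>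
      hzero v (mem_compl.mp hv) w (mem_compl.mp hw)
  rw [← det_mul_det_psub_inv_compl hM A, ← det_mul_det_psub_inv_compl hM B,
    ← det_mul_det_psub_inv_compl hM (A ∩ B), hblock]
  ring

theorem inv_submatrix_apply_of_forall_notMem_range {α : Type*} [Fintype α] [DecidableEq α]
    {M : Matrix V V ℝ} (hM : IsUnit M.det) {f : α → V} (hf : Function.Injective f)
    (hMf : IsUnit (M.submatrix f f).det) {v : α}
    (hrow : ∀ b ∉ Set.range f, M⁻¹ (f v) b = 0) (w : α) :
    (M.submatrix f f)⁻¹ v w = M⁻¹ (f v) (f w) := by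
  set r : α → ℝ := fun a => M⁻¹ (f v) (f a)
  have hr : r ᵥ* M.submatrix f f = Pi.single v 1 := by
    ext a
    have hsum : ∑ a', r a' * M (f a') (f a) = ∑ b, M⁻¹ (f v) b * M b (f a) :=
      Fintype.sum_of_injective f hf _ _ (fun b hb => by simp [hrow b hb]) fun _ => rfl
    have hKM : ∑ b, M⁻¹ (f v) b * M b (f a) = (1 : Matrix V V ℝ) (f v) (f a) := by
      rw [← nonsing_inv_mul M hM, mul_apply]
    simp only [vecMul, dotProduct, submatrix_apply, hsum, hKM, one_apply, hf.eq_iff,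
      Pi.single_apply, eq_comm]
  calc (M.submatrix f f)⁻¹ v w = (Pi.single v 1 ᵥ* (M.submatrix f f)⁻¹) w := by
        rw [single_one_vecMul]; rfl
    _ = (r ᵥ* (M.submatrix f f * (M.submatrix f f)⁻¹)) w := by rw [← vecMul_vecMul, hr]
    _ = r w := by rw [mul_nonsing_inv _ hMf, vecMul_one]

theorem posDef_psub {Ω : Matrix V V ℝ} (hΩ : Ω.PosDef) (A : Finset V) : (psub Ω A).PosDef :=
  hΩ.submatrix Subtype.val_injective

theorem isUnit_det_psub {Ω : Matrix V V ℝ} (hΩ : Ω.PosDef) (A : Finset V) :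
    IsUnit (psub Ω A).det :=
  (posDef_psub hΩ A).det_pos.ne'.isUnit

theorem inv_psub_apply_comm {Ω : Matrix V V ℝ} (hΩ : Ω.PosDef) (A : Finset V) (v w : ↥A) :
    (psub Ω A)⁻¹ v w = (psub Ω A)⁻¹ w v := by
  simpa using ((posDef_psub hΩ A).inv.isHermitian.apply w v)

def Finset.subtypeEquivOfSubset {A U : Finset V} (h : A ⊆ U) : ↥(A.subtype (· ∈ U)) ≃ ↥A where
  toFun x := ⟨x.1.1, mem_subtype.mp x.2⟩
  invFun a := ⟨⟨a, h a.2⟩, mem_subtype.mpr a.2⟩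
  left_inv _ := rfl
  right_inv _ := rfl

theorem det_psub_psub (Ω : Matrix V V ℝ) {A U : Finset V} (h : A ⊆ U) :
    (psub (psub Ω U) (A.subtype (· ∈ U))).det = (psub Ω A).det :=
  (det_submatrix_equiv_self (Finset.subtypeEquivOfSubset h).symm _).symm

theorem det_psub_univ (Ω : Matrix V V ℝ) : (psub Ω univ).det = Ω.det :=
  det_submatrix_equiv_self (Equiv.subtypeUnivEquiv mem_univ) Ω

theorem inv_psub_univ_apply {Ω : Matrix V V ℝ} (hΩ : IsUnit Ω.det) (v w : ↥(univ : Finset V)) :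
    (psub Ω univ)⁻¹ v w = Ω⁻¹ v w := by
  refine inv_submatrix_apply_of_forall_notMem_range hΩ Subtype.val_injective ?_ ?_ w
  · rwa [← det_psub_univ] at hΩ
  · exact fun b hb => absurd ⟨⟨b, mem_univ b⟩, rfl⟩ hb

theorem det_psub_mul_det_psub_of_union_eq {Ω : Matrix V V ℝ} {A B U : Finset V}
    (hAB : A ∪ B = U) (hU : IsUnit (psub Ω U).det)
    (hzero : ∀ v w : ↥U, ↑v ∉ B → ↑w ∉ A → (psub Ω U)⁻¹ v w = 0) :
    (psub Ω A).det * (psub Ω B).det = (psub Ω U).det * (psub Ω (A ∩ B)).det := by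
  have hcover : A.subtype (· ∈ U) ∪ B.subtype (· ∈ U) = univ := by
    ext u
    simpa [← hAB] using u.2
  have := det_psub_mul_det_psub hU hcover fun v hv w hw =>
    hzero v w (mt mem_subtype.mpr hv) (mt mem_subtype.mpr hw)
  have hinter : A.subtype (· ∈ U) ∩ B.subtype (· ∈ U) = (A ∩ B).subtype (· ∈ U) := by
    ext; simp
  rwa [hinter, det_psub_psub Ω (hAB ▸ subset_union_left),
    det_psub_psub Ω (hAB ▸ subset_union_right),
    det_psub_psub Ω (hAB ▸ inter_subset_left.trans subset_union_left)] at this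

theorem inv_psub_apply_of_subset {Ω : Matrix V V ℝ} {A U : Finset V} (hAU : A ⊆ U)
    (hU : IsUnit (psub Ω U).det) (hA : IsUnit (psub Ω A).det) {v : ↥A}
    (hrow : ∀ u : ↥U, ↑u ∉ A → (psub Ω U)⁻¹ ⟨v, hAU v.2⟩ u = 0) (w : ↥A) :
    (psub Ω A)⁻¹ v w = (psub Ω U)⁻¹ ⟨v, hAU v.2⟩ ⟨w, hAU w.2⟩ :=
  inv_submatrix_apply_of_forall_notMem_range (f := fun a : ↥A => (⟨a, hAU a.2⟩ : ↥U)) hU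
    (fun _ _ h => Subtype.ext (Subtype.mk.inj h)) hA
    (fun u hu => hrow u fun h => hu ⟨⟨u, h⟩, rfl⟩) w

end Minors

section Decomposable

variable {V : Type*} [Fintype V] [DecidableEq V] {k : ℕ}

-- No `v ≠ w` is needed: a diagonal pair is covered by any clique containing `v`.
def InvSupportedOnCliques (Ω : Matrix V V ℝ) (C : Fin k → Finset V) : Prop :=
  ∀ v w : ↥(univ.biUnion C), (∀ i, ↑v ∈ C i → ↑w ∉ C i) → (psub Ω (univ.biUnion C))⁻¹ v w = 0

theorem invSupportedOnCliques_of_biUnion_eq_univ {Ω : Matrix V V ℝ} (hΩ : IsUnit Ω.det)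
    {C : Fin k → Finset V} (hcover : univ.biUnion C = univ)
    (hzero : ∀ v w : V, v ≠ w → (¬ ∃ i, v ∈ C i ∧ w ∈ C i) → Ω⁻¹ v w = 0) :
    InvSupportedOnCliques Ω C := by
  unfold InvSupportedOnCliques
  rw [hcover]
  intro v w hvw
  rw [inv_psub_univ_apply hΩ]
  refine hzero v w (fun hveq => ?_) fun ⟨i, hvi, hwi⟩ => hvw i hvi hwi
  have hv : (v : V) ∈ univ.biUnion C := by rw [hcover]; exact mem_univ _
  obtain ⟨i, -, hvi⟩ := mem_biUnion.mp hv
  exact hvw i hvi (hveq ▸ hvi)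

theorem InvSupportedOnCliques.init {Ω : Matrix V V ℝ} (hΩ : Ω.PosDef)
    {C : Fin (k + 1) → Finset V} (hC : RunningIntersection C) (h : InvSupportedOnCliques Ω C) :
    InvSupportedOnCliques Ω (Fin.init C) := by
  set A := univ.biUnion (Fin.init C)
  have hAU : A ⊆ univ.biUnion C := biUnion_univ_fin_succ C ▸ subset_union_left
  intro v w hvw
  have hnot : ∀ i, ↑v ∈ C i → ↑w ∉ C i := fun i hvi hwi =>
    let ⟨j, hvj, hwj⟩ := hC.exists_mem_init v.2 w.2 hvi hwi
    hvw j hvj hwj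
  wlog hv : ↑v ∉ C (Fin.last k) generalizing v w
  · rw [inv_psub_apply_comm hΩ]
    exact this w v (fun j hwj hvj => hvw j hvj hwj) (fun i hwi hvi => hnot i hvi hwi)
      (hnot _ (not_not.mp hv))
  rw [inv_psub_apply_of_subset hAU (isUnit_det_psub hΩ _) (isUnit_det_psub hΩ A) ?_ w]
  · exact h _ _ hnot
  · exact fun u hu => h _ _ (forall_notMem_of_notMem_last hv hu)

theorem det_psub_biUnion_mul_prod_separator {Ω : Matrix V V ℝ} (hΩ : Ω.PosDef) :
    ∀ {k : ℕ} {C : Fin k → Finset V}, RunningIntersection C → InvSupportedOnCliques Ω C →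
      (psub Ω (univ.biUnion C)).det * ∏ i, (psub Ω (separator C i)).det =
        ∏ i, (psub Ω (C i)).det
  | 0, C, _, _ => by
    rw [univ_eq_empty, biUnion_empty]
    simp [det_isEmpty]
  | k + 1, C, hC, hinv => by
    set A := univ.biUnion (Fin.init C)
    have hstep : (psub Ω A).det * (psub Ω (C (Fin.last k))).det =
        (psub Ω (univ.biUnion C)).det * (psub Ω (A ∩ C (Fin.last k))).det :=
      det_psub_mul_det_psub_of_union_eq (biUnion_univ_fin_succ C).symm (isUnit_det_psub hΩ _)
        fun v w hv hw => hinv v w (forall_notMem_of_notMem_last hv hw)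
    have hinit : (psub Ω A).det * ∏ j : Fin k, (psub Ω (separator C j.castSucc)).det =
        ∏ j : Fin k, (psub Ω (C j.castSucc)).det := by
      rw [← prod_congr rfl fun j _ => congrArg (fun s => (psub Ω s).det) (separator_init C j)]
      exact det_psub_biUnion_mul_prod_separator hΩ hC.init (hinv.init hΩ hC)
    rw [Fin.prod_univ_castSucc, Fin.prod_univ_castSucc, separator_last, ← hinit, inter_comm]
    linear_combination -(∏ j : Fin k, (psub Ω (separator C j.castSucc)).det) * hstep

end Decomposable

theorem stmt_1_general {V : Type*} [Fintype V] [DecidableEq V]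
    (k : ℕ) (hk : 0 < k) (C : Fin k → Finset V)
    (hcover : Finset.univ.biUnion C = Finset.univ)
    (Sep : Fin k → Finset V)
    (hSep : ∀ i, Sep i = C i ∩ (Finset.Iio i).biUnion C)
    (hRIP : ∀ i : Fin k, (⟨0, hk⟩ : Fin k) < i → ∃ l < i, Sep i ⊆ C l)
    (Om : Matrix V V ℝ) (hpd : Om.PosDef)
    (hzero : ∀ v w : V, v ≠ w → (¬ ∃ i, v ∈ C i ∧ w ∈ C i) → Om⁻¹ v w = 0) :
    Om.det =
      (∏ i, (psub Om (C i)).det) /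
        ∏ i ∈ Finset.univ.erase (⟨0, hk⟩ : Fin k), (psub Om (Sep i)).det := by
  obtain rfl : Sep = separator C := funext hSep
  have hsep₀ : separator C ⟨0, hk⟩ = ∅ := separator_eq_empty_of_isMin C fun _ _ => Nat.zero_le _
  have hC : RunningIntersection C := fun i hi =>
    hRIP i <| lt_of_le_of_ne (Nat.zero_le _) fun h => by simp [h ▸ hsep₀] at hi
  have key := det_psub_biUnion_mul_prod_separator hpd hC
    (invSupportedOnCliques_of_biUnion_eq_univ hpd.det_pos.ne'.isUnit hcover hzero)
  rw [hcover, det_psub_univ] at key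
  rw [eq_div_iff (prod_pos fun i _ => (posDef_psub hpd _).det_pos).ne',
    prod_erase _ (by rw [hsep₀]; exact det_isEmpty), key]

/-- If `C₁, …, C_k` cover `V` and satisfy the running intersection property with
separators `S_i = C_i ∩ (C₁ ∪ ⋯ ∪ C_{i−1})`, and `Ω` is a symmetric positive definite
matrix whose inverse vanishes at every pair of distinct vertices not jointly contained
in some `C_i`, then `det Ω = (∏ᵢ det Ω_{C_i}) / (∏_{i≥2} det Ω_{S_i})`
(with `det Ω_∅ = 1`, which is automatic for a matrix indexed by the empty type). -/
theorem stmt_1 {V : Type*} [Fintype V] [DecidableEq V]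
    (k : ℕ) (hk : 0 < k) (C : Fin k → Finset V)
    (hcover : Finset.univ.biUnion C = Finset.univ)
    (Sep : Fin k → Finset V)
    (hSep : ∀ i, Sep i = C i ∩ (Finset.Iio i).biUnion C)
    (hRIP : ∀ i : Fin k, (⟨0, hk⟩ : Fin k) < i → ∃ l < i, Sep i ⊆ C l)
    (Om : Matrix V V ℝ) (hsym : Om.IsSymm) (hpd : Om.PosDef)
    (hzero : ∀ v w : V, v ≠ w → (¬ ∃ i, v ∈ C i ∧ w ∈ C i) → Om⁻¹ v w = 0) :
    Om.det =
      (∏ i, (psub Om (C i)).det) /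
        ∏ i ∈ Finset.univ.erase (⟨0, hk⟩ : Fin k), (psub Om (Sep i)).det :=
  stmt_1_general k hk C hcover Sep hSep hRIP Om hpd hzero
end
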